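/- Let h₁ be an n×n and h₂ an m×m complex positive definite matrix, let x₁, x₂ be matrices of matching sizes, and let s, t ≥ 0 be real numbers. Then ((h₁ ⊗ₖ h₂)^{s}) · (x₁ ⊗ₖ x₂) · ((h₁ ⊗ₖ h₂)^{t}) = (h₁^{s} · x₁ · h₁^{t}) ⊗ₖ (h₂^{s} · x₂ · h₂^{t}), and for every real p > 0, trace(|(h₁ ⊗ₖ h₂)^{s} (x₁ ⊗ₖ x₂) (h₁ ⊗ₖ h₂)^{t}|^p) = trace(|h₁^{s} x₁ h₁^{t}|^p) · trace(|h₂^{s} x₂ h₂^{t}|^p). -/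

import Mathlib

/-!
Diagonalize `h₁ = U D₁ U⋆` and `h₂ = V D₂ V⋆`. Then `h₁ ⊗ₖ h₂ = (U ⊗ₖ V) (D₁ ⊗ₖ D₂) (U ⊗ₖ V)⋆`,
where `U ⊗ₖ V` is unitary and `D₁ ⊗ₖ D₂` is diagonal with the products of eigenvalues on the
diagonal, on which the functional calculus acts entrywise (through a polynomial interpolating `f`
on the finite spectrum). Hence `f (h₁ ⊗ₖ h₂) = g h₁ ⊗ₖ h h₂` whenever `f (x y) = g x · h y` on the
spectra, which `t ↦ t ^ r` satisfies on `[0, ∞)`. This gives `(h₁ ⊗ₖ h₂)^r = h₁^r ⊗ₖ h₂^r`, and,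
applied to `(x₁ ⊗ₖ x₂)ᴴ (x₁ ⊗ₖ x₂) = x₁ᴴ x₁ ⊗ₖ x₂ᴴ x₂`, also `|x₁ ⊗ₖ x₂|^p = |x₁|^p ⊗ₖ |x₂|^p`;
the trace of a Kronecker product is the product of the traces.
-/

open Matrix Kronecker ComplexOrder

/-- The `r`-th power of a complex square matrix, obtained via the (real) continuous
functional calculus applied to `t ↦ t ^ r` (real `rpow`, so that `0 ^ r = 0` for `r ≠ 0`). -/
noncomputable def matRpow {k : Type*} [Fintype k] [DecidableEq k]
    (A : Matrix k k ℂ) (r : ℝ) : Matrix k k ℂ :=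
  cfc (fun x : ℝ => x ^ r) A

/-- The absolute value `|A| := (Aᴴ · A)^{1/2}` of a complex square matrix, where the square
root is taken via the continuous functional calculus. -/
noncomputable def matAbs {k : Type*} [Fintype k] [DecidableEq k]
    (A : Matrix k k ℂ) : Matrix k k ℂ :=
  matRpow (Aᴴ * A) (1 / 2 : ℝ)

namespace Matrix

open Polynomial Unitary

variable {𝕜 k l : Type*} [RCLike 𝕜] [Fintype k] [DecidableEq k] [Fintype l] [DecidableEq l]

omit [Fintype k] in
lemma isHermitian_diagonal_ofReal (d : k → ℝ) :
    (diagonal (RCLike.ofReal ∘ d : k → 𝕜)).IsHermitian :=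
  isHermitian_diagonal_of_self_adjoint _ (funext fun i => RCLike.conj_ofReal (d i))

lemma spectrum_real_diagonal_ofReal (d : k → ℝ) :
    spectrum ℝ (diagonal (RCLike.ofReal ∘ d : k → 𝕜)) = Set.range d := by
  ext x
  rw [← spectrum.algebraMap_mem_iff 𝕜, spectrum_diagonal]
  simp [eq_comm]

lemma aeval_diagonal_ofReal (d : k → ℝ) (p : ℝ[X]) :
    aeval (diagonal (RCLike.ofReal ∘ d : k → 𝕜)) p
      = diagonal (RCLike.ofReal ∘ (p.eval ·) ∘ d) := by
  induction p using Polynomial.induction_on' with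
  | add p q hp hq => rw [map_add, hp, hq, diagonal_add]; simp [Function.comp_def]
  | monomial n a =>
    simp [diagonal_pow, algebraMap_eq_diagonal, diagonal_mul_diagonal, Function.comp_def]

lemma cfc_diagonal_ofReal (d : k → ℝ) (f : ℝ → ℝ) :
    cfc f (diagonal (RCLike.ofReal ∘ d : k → 𝕜)) = diagonal (RCLike.ofReal ∘ f ∘ d) := by
  set p := Lagrange.interpolate (Finset.univ.image d) id f
  have hp (i : k) : p.eval (d i) = f (d i) :=
    Lagrange.eval_interpolate_at_node f (Set.injOn_id _) (Finset.mem_image_of_mem d (by simp))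
  have hfp : Set.EqOn f (p.eval ·) (spectrum ℝ (diagonal (RCLike.ofReal ∘ d : k → 𝕜))) := by
    rw [spectrum_real_diagonal_ofReal]
    rintro - ⟨i, rfl⟩
    exact (hp i).symm
  rw [cfc_congr hfp, cfc_polynomial p _ (isHermitian_diagonal_ofReal d).isSelfAdjoint,
    aeval_diagonal_ofReal]
  simp [Function.comp_def, hp]

lemma cfc_conjStarAlgAut (u : unitary (Matrix k k 𝕜)) (f : ℝ → ℝ) {A : Matrix k k 𝕜}
    (hA : IsSelfAdjoint A) :
    cfc f (conjStarAlgAut 𝕜 _ u A) = conjStarAlgAut 𝕜 _ u (cfc f A) := by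
  refine (StarAlgHomClass.map_cfc (S := 𝕜) (conjStarAlgAut 𝕜 _ u) f A ?_ ?_ hA (hA.map _)).symm
  · rw [continuousOn_iff_continuous_domRestrict]
    fun_prop
  · change Continuous fun X => (u : Matrix k k 𝕜) * X * star (u : Matrix k k 𝕜)
    fun_prop

lemma conjStarAlgAut_kronecker (u : unitary (Matrix k k 𝕜)) (v : unitary (Matrix l l 𝕜))
    (X : Matrix k k 𝕜) (Y : Matrix l l 𝕜) :
    conjStarAlgAut 𝕜 _ u X ⊗ₖ conjStarAlgAut 𝕜 _ v Y
      = conjStarAlgAut 𝕜 _ ⟨(u : Matrix k k 𝕜) ⊗ₖ (v : Matrix l l 𝕜),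
          kronecker_mem_unitary u.2 v.2⟩ (X ⊗ₖ Y) := by
  change ((u : Matrix k k 𝕜) * X * star (u : Matrix k k 𝕜))
      ⊗ₖ ((v : Matrix l l 𝕜) * Y * star (v : Matrix l l 𝕜))
    = ((u : Matrix k k 𝕜) ⊗ₖ (v : Matrix l l 𝕜)) * (X ⊗ₖ Y)
      * star ((u : Matrix k k 𝕜) ⊗ₖ (v : Matrix l l 𝕜))
  rw [mul_kronecker_mul, mul_kronecker_mul, star_eq_conjTranspose, star_eq_conjTranspose,
    star_eq_conjTranspose, conjTranspose_kronecker]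

omit [Fintype k] [Fintype l] in
lemma diagonal_ofReal_kronecker (a : k → ℝ) (b : l → ℝ) :
    diagonal (RCLike.ofReal ∘ a : k → 𝕜) ⊗ₖ diagonal (RCLike.ofReal ∘ b)
      = diagonal (RCLike.ofReal ∘ fun p : k × l => a p.1 * b p.2) := by
  simp [diagonal_kronecker_diagonal, Function.comp_def]

lemma IsHermitian.cfc_kronecker {A : Matrix k k 𝕜} {B : Matrix l l 𝕜} (hA : A.IsHermitian)
    (hB : B.IsHermitian) {f g h : ℝ → ℝ}
    (hfgh : ∀ x ∈ spectrum ℝ A, ∀ y ∈ spectrum ℝ B, f (x * y) = g x * h y) :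
    cfc f (A ⊗ₖ B) = cfc g A ⊗ₖ cfc h B := by
  rw [hA.cfc_eq, hB.cfc_eq, IsHermitian.cfc, IsHermitian.cfc, conjStarAlgAut_kronecker,
    diagonal_ofReal_kronecker]
  conv_lhs => rw [hA.spectral_theorem, hB.spectral_theorem, conjStarAlgAut_kronecker,
    diagonal_ofReal_kronecker, cfc_conjStarAlgAut _ _ (isHermitian_diagonal_ofReal _),
    cfc_diagonal_ofReal]
  congr 2
  ext p
  simp [hfgh _ (hA.eigenvalues_mem_spectrum_real p.1) _ (hB.eigenvalues_mem_spectrum_real p.2)]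

end Matrix

section MatrixPowers

open scoped MatrixOrder

variable {k l : Type*} [Fintype k] [DecidableEq k] [Fintype l] [DecidableEq l]

lemma Matrix.PosSemidef.matRpow {A : Matrix k k ℂ} (hA : A.PosSemidef) (r : ℝ) :
    (matRpow A r).PosSemidef :=
  nonneg_iff_posSemidef.mp <|
    cfc_nonneg fun _ hx => Real.rpow_nonneg (spectrum_nonneg_of_nonneg hA.nonneg hx) r

lemma matAbs_posSemidef (A : Matrix k k ℂ) : (matAbs A).PosSemidef :=
  (posSemidef_conjTranspose_mul_self A).matRpow _

lemma matRpow_kronecker {A : Matrix k k ℂ} {B : Matrix l l ℂ} (hA : A.PosSemidef)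
    (hB : B.PosSemidef) (r : ℝ) : matRpow (A ⊗ₖ B) r = matRpow A r ⊗ₖ matRpow B r :=
  hA.isHermitian.cfc_kronecker hB.isHermitian fun _ hx _ hy =>
    Real.mul_rpow (spectrum_nonneg_of_nonneg hA.nonneg hx) (spectrum_nonneg_of_nonneg hB.nonneg hy)

lemma matAbs_kronecker (X : Matrix k k ℂ) (Y : Matrix l l ℂ) :
    matAbs (X ⊗ₖ Y) = matAbs X ⊗ₖ matAbs Y := by
  rw [matAbs, conjTranspose_kronecker, ← mul_kronecker_mul]
  exact matRpow_kronecker (posSemidef_conjTranspose_mul_self X)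
    (posSemidef_conjTranspose_mul_self Y) _

end MatrixPowers

theorem kosaki_core_multiplicative_general {n m : ℕ}
    (h₁ : Matrix (Fin n) (Fin n) ℂ) (h₂ : Matrix (Fin m) (Fin m) ℂ)
    (x₁ : Matrix (Fin n) (Fin n) ℂ) (x₂ : Matrix (Fin m) (Fin m) ℂ)
    (hh₁ : h₁.PosDef) (hh₂ : h₂.PosDef) (s t : ℝ) :
    matRpow (h₁ ⊗ₖ h₂) s * (x₁ ⊗ₖ x₂) * matRpow (h₁ ⊗ₖ h₂) t
      = (matRpow h₁ s * x₁ * matRpow h₁ t) ⊗ₖ (matRpow h₂ s * x₂ * matRpow h₂ t) ∧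
    ∀ p : ℝ, 0 < p →
      (matRpow (matAbs (matRpow (h₁ ⊗ₖ h₂) s * (x₁ ⊗ₖ x₂) * matRpow (h₁ ⊗ₖ h₂) t)) p).trace
        = (matRpow (matAbs (matRpow h₁ s * x₁ * matRpow h₁ t)) p).trace
          * (matRpow (matAbs (matRpow h₂ s * x₂ * matRpow h₂ t)) p).trace := by
  have hconj : matRpow (h₁ ⊗ₖ h₂) s * (x₁ ⊗ₖ x₂) * matRpow (h₁ ⊗ₖ h₂) t
      = (matRpow h₁ s * x₁ * matRpow h₁ t) ⊗ₖ (matRpow h₂ s * x₂ * matRpow h₂ t) := by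
    rw [matRpow_kronecker hh₁.posSemidef hh₂.posSemidef, matRpow_kronecker hh₁.posSemidef
      hh₂.posSemidef, ← mul_kronecker_mul, ← mul_kronecker_mul]
  refine ⟨hconj, fun p _ => ?_⟩
  rw [hconj, matAbs_kronecker, matRpow_kronecker (matAbs_posSemidef _) (matAbs_posSemidef _),
    trace_kronecker]

/-- The computational core of the multiplicativity of the Kosaki `L^p`-norm: for positive
definite `h₁, h₂`, arbitrary `x₁, x₂` and reals `s, t ≥ 0`, the two-sided multiplication by
powers of `h₁ ⊗ₖ h₂` factorizes as a Kronecker product, and the Schatten trace quantities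
are multiplicative for every `p > 0`. -/
theorem kosaki_core_multiplicative {n m : ℕ}
    (h₁ : Matrix (Fin n) (Fin n) ℂ) (h₂ : Matrix (Fin m) (Fin m) ℂ)
    (x₁ : Matrix (Fin n) (Fin n) ℂ) (x₂ : Matrix (Fin m) (Fin m) ℂ)
    (hh₁ : h₁.PosDef) (hh₂ : h₂.PosDef) (s t : ℝ) (hs : 0 ≤ s) (ht : 0 ≤ t) :
    matRpow (h₁ ⊗ₖ h₂) s * (x₁ ⊗ₖ x₂) * matRpow (h₁ ⊗ₖ h₂) t
      = (matRpow h₁ s * x₁ * matRpow h₁ t) ⊗ₖ (matRpow h₂ s * x₂ * matRpow h₂ t) ∧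
    ∀ p : ℝ, 0 < p →
      (matRpow (matAbs (matRpow (h₁ ⊗ₖ h₂) s * (x₁ ⊗ₖ x₂) * matRpow (h₁ ⊗ₖ h₂) t)) p).trace
        = (matRpow (matAbs (matRpow h₁ s * x₁ * matRpow h₁ t)) p).trace
          * (matRpow (matAbs (matRpow h₂ s * x₂ * matRpow h₂ t)) p).trace :=
  kosaki_core_multiplicative_general h₁ h₂ x₁ x₂ hh₁ hh₂ s t
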